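/- arXiv:2405.09381 — 7 statements merged into one kernel-verified Lean document; each statement's English description precedes it below -/
import Mathlib

section
/- The p-barycenter map x̄_p : ℝ^{Nd} → ℝ^d, sending (x₁,…,x_N) to the unique minimizer of z ↦ Σᵢ λᵢ |xᵢ - z|^p, is continuous. -/
open Finset Filter Topology Set

/-! The cost `z ↦ ∑ i, λᵢ ‖xᵢ - z‖ ^ p` is jointly continuous in `(x, z)` and, for `p > 1` in a
strictly convex space, strictly convex in `z`, so its minimizer is unique. As `λᵢ ‖xᵢ - z‖ ^ p` is
at most the cost of a minimizer `z`, which is at most the cost of `0`, the minimizers for `x` near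
`a` lie in a fixed compact set; any of their cluster points as `x → a` minimizes the cost at `a`,
hence is the minimizer at `a`. -/

section ArgminContinuity

variable {X Z β : Type*} [TopologicalSpace X] [TopologicalSpace Z]
  [TopologicalSpace β] [Preorder β] [OrderClosedTopology β]

theorem continuous_of_unique_isMinOn {F : X → Z → β} (hF : Continuous (Function.uncurry F))
    {m : X → Z} (hmin : ∀ x, IsMinOn (F x) univ (m x))
    (huniq : ∀ x z, IsMinOn (F x) univ z → z = m x)
    (hbdd : ∀ a, ∃ K, IsCompact K ∧ ∀ᶠ x in 𝓝 a, m x ∈ K) : Continuous m := by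
  refine continuous_iff_continuousAt.2 fun a => ?_
  obtain ⟨K, hK, hmK⟩ := hbdd a
  refine hK.tendsto_nhds_of_unique_mapClusterPt hmK fun z _ hz => huniq a z fun w _ => ?_
  -- This filter plays the role of a subsequence along which `m x → z`.
  have : (comap m (𝓝 z) ⊓ 𝓝 a).NeBot := neBot_inf_comap_iff_map'.2 hz
  have hx : Tendsto id (comap m (𝓝 z) ⊓ 𝓝 a) (𝓝 a) := inf_le_right
  have hmx : Tendsto m (comap m (𝓝 z) ⊓ 𝓝 a) (𝓝 z) := tendsto_comap.mono_left inf_le_left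
  exact le_of_tendsto_of_tendsto' ((hF.tendsto (a, z)).comp (hx.prodMk_nhds hmx))
    ((hF.tendsto (a, w)).comp (hx.prodMk_nhds tendsto_const_nhds)) fun x => hmin x (mem_univ w)

theorem exists_isCompact_eventually_mem_of_norm_le {E : Type*} [SeminormedAddCommGroup E]
    [ProperSpace E] {m : X → E} {g : X → ℝ} (hg : Continuous g) (hm : ∀ x, ‖m x‖ ≤ g x) (a : X) :
    ∃ K, IsCompact K ∧ ∀ᶠ x in 𝓝 a, m x ∈ K :=
  ⟨Metric.closedBall 0 (g a + 1), isCompact_closedBall _ _,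
    (hg.continuousAt.eventually (gt_mem_nhds (lt_add_one (g a)))).mono fun x hx =>
      mem_closedBall_zero_iff.2 ((hm x).trans hx.le)⟩

end ArgminContinuity

section StrictConvexity

variable {E : Type*} [NormedAddCommGroup E] [NormedSpace ℝ E]

theorem strictConvexOn_norm_rpow [StrictConvexSpace ℝ E] {p : ℝ} (hp : 1 < p) :
    StrictConvexOn ℝ univ fun x : E => ‖x‖ ^ p := by
  refine ⟨convex_univ, fun x _ y _ hxy a b ha hb hab => ?_⟩
  have hp0 : 0 < p := zero_lt_one.trans hp
  simp only [smul_eq_mul]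
  rcases eq_or_ne ‖x‖ ‖y‖ with hn | hn
  · have hlt : ‖a • x + b • y‖ < ‖x‖ := norm_combo_lt_of_ne le_rfl hn.ge hxy ha hb hab
    calc ‖a • x + b • y‖ ^ p < ‖x‖ ^ p := Real.rpow_lt_rpow (norm_nonneg _) hlt hp0
      _ = a * ‖x‖ ^ p + b * ‖y‖ ^ p := by rw [← hn, ← add_mul, hab, one_mul]
  · have htri : ‖a • x + b • y‖ ≤ a * ‖x‖ + b * ‖y‖ :=
      (convexOn_norm convex_univ).2 trivial trivial ha.le hb.le hab
    calc ‖a • x + b • y‖ ^ p ≤ (a * ‖x‖ + b * ‖y‖) ^ p := by gcongr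
      _ < a * ‖x‖ ^ p + b * ‖y‖ ^ p :=
        (strictConvexOn_rpow hp).2 (norm_nonneg x) (norm_nonneg y) hn ha hb hab

theorem strictConvexOn_norm_sub_rpow [StrictConvexSpace ℝ E] {p : ℝ} (hp : 1 < p) (a : E) :
    StrictConvexOn ℝ univ fun z : E => ‖a - z‖ ^ p := by
  simpa [Function.comp_def, ← sub_eq_add_neg, norm_sub_rev] using
    (strictConvexOn_norm_rpow hp).translate_left (-a)

theorem strictConvexOn_sum_mul {ι : Type*} {s : Finset ι} (hs : s.Nonempty) {w : ι → ℝ}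
    (hw : ∀ i ∈ s, 0 < w i) {f : ι → E → ℝ} {S : Set E} (hf : ∀ i ∈ s, StrictConvexOn ℝ S (f i)) :
    StrictConvexOn ℝ S fun z => ∑ i ∈ s, w i * f i z := by
  obtain ⟨i₀, hi₀⟩ := hs
  refine ⟨(hf i₀ hi₀).1, fun x hx y hy hxy a b ha hb hab => ?_⟩
  calc ∑ i ∈ s, w i * f i (a • x + b • y)
      < ∑ i ∈ s, w i * (a • f i x + b • f i y) :=
        sum_lt_sum_of_nonempty ⟨i₀, hi₀⟩ fun i hi =>
          mul_lt_mul_of_pos_left ((hf i hi).2 hx hy hxy ha hb hab) (hw i hi)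
    _ = a • ∑ i ∈ s, w i * f i x + b • ∑ i ∈ s, w i * f i y := by
        simp only [smul_eq_mul, mul_sum, ← sum_add_distrib]
        exact sum_congr rfl fun i _ => by ring

end StrictConvexity

section BarycenterCost

variable {ι E : Type*} [Fintype ι] [NormedAddCommGroup E]

noncomputable def pBarycenterCost (l : ι → ℝ) (p : ℝ) (x : ι → E) (z : E) : ℝ :=
  ∑ i, l i * ‖x i - z‖ ^ p

theorem continuous_pBarycenterCost (l : ι → ℝ) {p : ℝ} (hp : 0 ≤ p) :
    Continuous (Function.uncurry (pBarycenterCost l p : (ι → E) → E → ℝ)) :=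
  continuous_finsetSum _ fun i _ => continuous_const.mul <|
    (((continuous_apply i).comp continuous_fst).sub continuous_snd).norm.rpow_const
      fun _ => Or.inr hp

theorem strictConvexOn_pBarycenterCost [NormedSpace ℝ E] [StrictConvexSpace ℝ E] [Nonempty ι]
    {l : ι → ℝ} (hl : ∀ i, 0 < l i) {p : ℝ} (hp : 1 < p) (x : ι → E) :
    StrictConvexOn ℝ univ (pBarycenterCost l p x) :=
  strictConvexOn_sum_mul univ_nonempty (fun i _ => hl i)
    fun i _ => strictConvexOn_norm_sub_rpow hp (x i)

theorem norm_le_of_pBarycenterCost_le {l : ι → ℝ} (hl : ∀ i, 0 ≤ l i) {p : ℝ} (hp : 0 < p)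
    {x : ι → E} {z : E} {c : ℝ} (hc : pBarycenterCost l p x z ≤ c) (i : ι) (hi : 0 < l i) :
    ‖z‖ ≤ ‖x i‖ + (c / l i) ^ p⁻¹ := by
  have hsingle : l i * ‖x i - z‖ ^ p ≤ c :=
    (single_le_sum (f := fun j => l j * ‖x j - z‖ ^ p)
      (fun j _ => mul_nonneg (hl j) (by positivity)) (mem_univ i)).trans hc
  have hc0 : 0 ≤ c / l i :=
    div_nonneg ((by positivity : 0 ≤ l i * ‖x i - z‖ ^ p).trans hsingle) hi.le
  have hdist : ‖x i - z‖ ≤ (c / l i) ^ p⁻¹ := by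
    rw [Real.le_rpow_inv_iff_of_pos (norm_nonneg _) hc0 hp, le_div_iff₀ hi, mul_comm]
    exact hsingle
  linarith [norm_le_norm_add_norm_sub (x i) z]

end BarycenterCost

theorem p_barycenter_continuous_general
    (d N : ℕ) (hN : 1 ≤ N) (p : ℝ) (hp : 1 < p)
    (l : Fin N → ℝ) (hl : ∀ i, 0 < l i)
    (bar : (Fin N → EuclideanSpace ℝ (Fin d)) → EuclideanSpace ℝ (Fin d))
    (hbar : ∀ x, ∀ w : EuclideanSpace ℝ (Fin d),
      ∑ i, l i * ‖x i - bar x‖ ^ p ≤ ∑ i, l i * ‖x i - w‖ ^ p) :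
    Continuous bar := by
  have hp0 : 0 < p := zero_lt_one.trans hp
  let i₀ : Fin N := ⟨0, hN⟩
  have : Nonempty (Fin N) := ⟨i₀⟩
  have hcost := continuous_pBarycenterCost (E := EuclideanSpace ℝ (Fin d)) l hp0.le
  have hmin (x) : IsMinOn (pBarycenterCost l p x) univ (bar x) := isMinOn_univ_iff.2 (hbar x)
  have huniq (x z) (hz : IsMinOn (pBarycenterCost l p x) univ z) : z = bar x :=
    (strictConvexOn_pBarycenterCost hl hp x).eq_of_isMinOn hz (hmin x) trivial trivial
  have hbound (x) : ‖bar x‖ ≤ ‖x i₀‖ + (pBarycenterCost l p x 0 / l i₀) ^ p⁻¹ :=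
    norm_le_of_pBarycenterCost_le (fun i => (hl i).le) hp0 (hbar x 0) i₀ (hl i₀)
  have hbound_cont : Continuous fun x : Fin N → EuclideanSpace ℝ (Fin d) =>
      ‖x i₀‖ + (pBarycenterCost l p x 0 / l i₀) ^ p⁻¹ :=
    (continuous_apply i₀).norm.add <|
      ((hcost.comp (continuous_id.prodMk continuous_const)).div_const _).rpow_const
        fun _ => Or.inr (inv_nonneg.2 hp0.le)
  exact continuous_of_unique_isMinOn hcost hmin huniq
    (exists_isCompact_eventually_mem_of_norm_le hbound_cont hbound)

/-- the `p`-barycenter map `(x₁,…,x_N) ↦ x̄_p(x)` is continuous. -/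
theorem p_barycenter_continuous
    (d N : ℕ) (hd : 1 ≤ d) (hN : 1 ≤ N) (p : ℝ) (hp : 1 < p)
    (l : Fin N → ℝ) (hl : ∀ i, 0 < l i) (hsum : ∑ i, l i = 1)
    (bar : (Fin N → EuclideanSpace ℝ (Fin d)) → EuclideanSpace ℝ (Fin d))
    (hbar : ∀ x, ∀ w : EuclideanSpace ℝ (Fin d),
      ∑ i, l i * ‖x i - bar x‖ ^ p ≤ ∑ i, l i * ‖x i - w‖ ^ p) :
    Continuous bar :=
  p_barycenter_continuous_general d N hN p hp l hl bar hbar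
end

section
/- For every x = (x₁,…,x_N) ∈ ℝ^{Nd}, the set of limit points of the family {x̄_p(x)}_{p∈(1,∞)} as p → ∞ is nonempty, and every such limit point is a minimizer of z ↦ max_{i=1,…,N} |xᵢ - z|. -/
/-!
Comparing the minimizer `x̄_p` with an arbitrary point `w`,
`l_j ‖x_j - x̄_p‖^p ≤ ∑ l_i ‖x_i - x̄_p‖^p ≤ ∑ l_i ‖x_i - w‖^p ≤ (max_i ‖x_i - w‖)^p`,
so `‖x_j - x̄_p‖ ≤ l_j^(-1/p) max_i ‖x_i - w‖`. Taking `w = x_j` bounds the family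
(as `l_j^(-1/p) ≤ 1 / l_j`), so compactness of closed balls yields a cluster point; since
`l_j^(-1/p) → 1`, every cluster point `L` satisfies `‖x_j - L‖ ≤ max_i ‖x_i - w‖` for all `j`.
-/

open Finset Filter Topology

theorem Real.le_div_rpow_inv_of_mul_rpow_le {a l M p : ℝ} (ha : 0 ≤ a) (hl : 0 < l)
    (hM : 0 ≤ M) (hp : 0 < p) (h : l * a ^ p ≤ M ^ p) : a ≤ M / l ^ p⁻¹ := by
  rw [le_div_iff₀ (by positivity)]
  calc a * l ^ p⁻¹ = (l * a ^ p) ^ p⁻¹ := by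
        rw [Real.mul_rpow hl.le (by positivity), Real.rpow_rpow_inv ha hp.ne', mul_comm]
    _ ≤ (M ^ p) ^ p⁻¹ := by gcongr
    _ = M := Real.rpow_rpow_inv hM hp.ne'

theorem Real.tendsto_rpow_inv_atTop_nhds_one {a : ℝ} (ha : a ≠ 0) :
    Tendsto (fun p : ℝ => a ^ p⁻¹) atTop (𝓝 1) := by
  simpa [Function.comp_def] using
    (Real.continuousAt_const_rpow (b := 0) ha).tendsto.comp tendsto_inv_atTop_zero

theorem MapClusterPt.le_of_eventually_le_of_tendsto {α X : Type*} [TopologicalSpace X]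
    {F : Filter α} {f : α → X} {L : X} (hL : MapClusterPt L F f) {g : X → ℝ} (hg : Continuous g)
    {u : α → ℝ} {c : ℝ} (hu : Tendsto u F (𝓝 c)) (h : ∀ᶠ a in F, g (f a) ≤ u a) : g L ≤ c := by
  refine le_of_forall_pos_le_add fun ε hε => ?_
  refine (isClosed_le hg continuous_const).mem_of_mapClusterPt hL ?_
  filter_upwards [h, hu.eventually (ge_mem_nhds (lt_add_of_pos_right c hε))] with a h₁ h₂
  exact h₁.trans h₂

section WeightedRpowSum

variable {ι E : Type*} [Fintype ι] [SeminormedAddCommGroup E] {l : ι → ℝ} {x : ι → E}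

theorem weighted_rpow_sum_le_iSup_rpow {a : ι → ℝ} (hl : ∀ i, 0 ≤ l i) (hsum : ∑ i, l i = 1)
    (ha : ∀ i, 0 ≤ a i) {p : ℝ} (hp : 0 ≤ p) : ∑ i, l i * a i ^ p ≤ (⨆ i, a i) ^ p :=
  calc ∑ i, l i * a i ^ p ≤ ∑ i, l i * (⨆ i, a i) ^ p := by
        gcongr with i
        · exact hl i
        · exact ha i
        · exact le_ciSup (Set.finite_range a).bddAbove i
    _ = (⨆ i, a i) ^ p := by rw [← sum_mul, hsum, one_mul]

theorem norm_sub_le_iSup_div_rpow_inv (hl : ∀ i, 0 < l i) (hsum : ∑ i, l i = 1) {p : ℝ}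
    (hp : 0 < p) {v w : E}
    (hvw : ∑ i, l i * ‖x i - v‖ ^ p ≤ ∑ i, l i * ‖x i - w‖ ^ p) (j : ι) :
    ‖x j - v‖ ≤ (⨆ i, ‖x i - w‖) / l j ^ p⁻¹ := by
  refine Real.le_div_rpow_inv_of_mul_rpow_le (norm_nonneg _) (hl j)
    (Real.iSup_nonneg fun _ => norm_nonneg _) hp ?_
  calc l j * ‖x j - v‖ ^ p ≤ ∑ i, l i * ‖x i - v‖ ^ p :=
        single_le_sum (f := fun i => l i * ‖x i - v‖ ^ p)
          (fun i _ => by have := hl i; positivity) (mem_univ j)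
    _ ≤ ∑ i, l i * ‖x i - w‖ ^ p := hvw
    _ ≤ (⨆ i, ‖x i - w‖) ^ p :=
        weighted_rpow_sum_le_iSup_rpow (fun i => (hl i).le) hsum (fun _ => norm_nonneg _) hp.le

theorem norm_sub_le_iSup_div (hl : ∀ i, 0 < l i) (hsum : ∑ i, l i = 1) {p : ℝ}
    (hp : 1 ≤ p) {v w : E}
    (hvw : ∑ i, l i * ‖x i - v‖ ^ p ≤ ∑ i, l i * ‖x i - w‖ ^ p) (j : ι) :
    ‖x j - v‖ ≤ (⨆ i, ‖x i - w‖) / l j := by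
  have hlj_le : l j ≤ 1 := hsum ▸ single_le_sum (fun i _ => (hl i).le) (mem_univ j)
  refine (norm_sub_le_iSup_div_rpow_inv hl hsum (by linarith) hvw j).trans ?_
  exact div_le_div_of_nonneg_left (Real.iSup_nonneg fun _ => norm_nonneg _) (hl j)
    (Real.self_le_rpow_of_le_one (hl j).le hlj_le (inv_le_one_of_one_le₀ hp))

end WeightedRpowSum

theorem p_barycenter_limit_points_p_to_infty_general
    (d N : ℕ)
    (l : Fin N → ℝ) (hl : ∀ i, 0 < l i) (hsum : ∑ i, l i = 1)
    (x : Fin N → EuclideanSpace ℝ (Fin d))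
    (bar : ℝ → EuclideanSpace ℝ (Fin d))
    (hbar : ∀ p : ℝ, 1 < p → ∀ w : EuclideanSpace ℝ (Fin d),
      ∑ i, l i * ‖x i - bar p‖ ^ p ≤ ∑ i, l i * ‖x i - w‖ ^ p) :
    (∃ L : EuclideanSpace ℝ (Fin d), MapClusterPt L atTop bar) ∧
    (∀ L : EuclideanSpace ℝ (Fin d), MapClusterPt L atTop bar →
      ∀ w : EuclideanSpace ℝ (Fin d),
        (⨆ i, ‖x i - L‖) ≤ ⨆ i, ‖x i - w‖) := by
  refine ⟨?_, fun L hL w => ?_⟩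
  · obtain ⟨j, -, -⟩ := exists_ne_zero_of_sum_ne_zero (hsum ▸ one_ne_zero : ∑ i, l i ≠ 0)
    have hball : ∀ᶠ p in atTop,
        bar p ∈ Metric.closedBall (x j) ((⨆ i, ‖x i - x j‖) / l j) := by
      filter_upwards [eventually_gt_atTop 1] with p hp
      rw [mem_closedBall_iff_norm']
      exact norm_sub_le_iSup_div hl hsum hp.le (hbar p hp (x j)) j
    obtain ⟨L, -, hL⟩ := (isCompact_closedBall _ _).exists_mapClusterPt (le_principal_iff.2 hball)
    exact ⟨L, hL⟩
  · refine Real.iSup_le (fun j => ?_) (Real.iSup_nonneg fun _ => norm_nonneg _)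
    have hbound : Tendsto (fun p : ℝ => (⨆ i, ‖x i - w‖) / l j ^ p⁻¹) atTop
        (𝓝 (⨆ i, ‖x i - w‖)) := by
      simpa [Pi.div_def] using
        tendsto_const_nhds.div (Real.tendsto_rpow_inv_atTop_nhds_one (hl j).ne') one_ne_zero
    refine hL.le_of_eventually_le_of_tendsto (g := fun z => ‖x j - z‖)
      (continuous_const.sub continuous_id).norm hbound ?_
    filter_upwards [eventually_gt_atTop 1] with p hp
    exact norm_sub_le_iSup_div_rpow_inv hl hsum (by linarith) (hbar p hp w) j

/-- the family `p ↦ x̄_p(x)` has cluster points as `p → ∞`, and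
every cluster point minimizes `z ↦ max_i ‖xᵢ - z‖`. -/
theorem p_barycenter_limit_points_p_to_infty
    (d N : ℕ) (hd : 1 ≤ d) (hN : 1 ≤ N)
    (l : Fin N → ℝ) (hl : ∀ i, 0 < l i) (hsum : ∑ i, l i = 1)
    (x : Fin N → EuclideanSpace ℝ (Fin d))
    (bar : ℝ → EuclideanSpace ℝ (Fin d))
    (hbar : ∀ p : ℝ, 1 < p → ∀ w : EuclideanSpace ℝ (Fin d),
      ∑ i, l i * ‖x i - bar p‖ ^ p ≤ ∑ i, l i * ‖x i - w‖ ^ p) :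
    (∃ L : EuclideanSpace ℝ (Fin d), MapClusterPt L atTop bar) ∧
    (∀ L : EuclideanSpace ℝ (Fin d), MapClusterPt L atTop bar →
      ∀ w : EuclideanSpace ℝ (Fin d),
        (⨆ i, ‖x i - L‖) ≤ ⨆ i, ‖x i - w‖) :=
  p_barycenter_limit_points_p_to_infty_general d N l hl hsum x bar hbar
end

section
/- For every x = (x₁,…,x_N) ∈ ℝ^{Nd}, every limit point of x̄_p(x) as p → 1⁺ is a minimizer of z ↦ Σᵢ λᵢ |xᵢ - z|. -/
/-!
The objective `F(p, z) = ∑ i, λᵢ ‖xᵢ - z‖ ^ p` is jointly continuous in `(p, z)` for `p > 0`.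
Minimality of `x̄_p` says that the pair `(F(p, x̄_p), F(p, w))` lies in the closed set
`{(s, t) | s ≤ t}`, so it passes to every cluster point of `x̄_p` as `p → 1⁺`.
-/

open Filter Topology

section ClusterPoint

variable {α X Y : Type*} [TopologicalSpace X] [TopologicalSpace Y]

theorem MapClusterPt.prodMk_of_tendsto {F : Filter α} {f : α → X} {g : α → Y} {a : X} {y : Y}
    (hf : Tendsto f F (𝓝 a)) (hg : MapClusterPt y F g) :
    MapClusterPt (a, y) F fun t => (f t, g t) := by
  rw [((𝓝 a).basis_sets.prod_nhds (𝓝 y).basis_sets).mapClusterPt_iff_frequently]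
  rintro ⟨s, t⟩ ⟨hs, ht⟩
  exact ((mapClusterPt_iff_frequently.1 hg) t ht).and_eventually (hf hs) |>.mono
    fun _ h => ⟨h.2, h.1⟩

theorem isMinOn_univ_of_mapClusterPt {f : X → Y → ℝ} {F : Filter X} {a : X} {u : X → Y} {L : Y}
    (hF : F ≤ 𝓝 a) (hf : ∀ z, ContinuousAt (Function.uncurry f) (a, z))
    (hmin : ∀ᶠ p in F, IsMinOn (f p) Set.univ (u p)) (hu : MapClusterPt L F u) :
    IsMinOn (f a) Set.univ L := by
  refine isMinOn_univ_iff.2 fun w => ?_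
  have hpair : MapClusterPt (a, L) F fun p => (p, u p) := hu.prodMk_of_tendsto hF
  have hvalues : ContinuousAt (fun q : X × Y => (f q.1 q.2, f q.1 w)) (a, L) :=
    (hf L).prodMk ((hf w).comp_of_eq (continuousAt_fst.prodMk continuousAt_const) rfl)
  exact isClosed_le continuous_fst continuous_snd |>.mem_of_mapClusterPt
    (hpair.continuousAt_comp hvalues) (hmin.mono fun p hp => isMinOn_univ_iff.1 hp w)

end ClusterPoint

theorem continuousAt_sum_mul_norm_sub_rpow {ι E : Type*} [Fintype ι] [SeminormedAddCommGroup E]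
    (l : ι → ℝ) (x : ι → E) {p : ℝ} (hp : 0 < p) (z : E) :
    ContinuousAt (fun q : ℝ × E => ∑ i, l i * ‖x i - q.2‖ ^ q.1) (p, z) := by
  refine tendsto_finsetSum _ fun i _ => continuousAt_const.mul ?_
  exact (continuous_const.sub continuous_snd).norm.continuousAt.rpow continuousAt_fst (Or.inr hp)

theorem p_barycenter_limit_points_p_to_one_general
    (d N : ℕ)
    (l : Fin N → ℝ)
    (x : Fin N → EuclideanSpace ℝ (Fin d))
    (bar : ℝ → EuclideanSpace ℝ (Fin d))
    (hbar : ∀ p : ℝ, 1 < p → ∀ w : EuclideanSpace ℝ (Fin d),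
      ∑ i, l i * ‖x i - bar p‖ ^ p ≤ ∑ i, l i * ‖x i - w‖ ^ p) :
    ∀ L : EuclideanSpace ℝ (Fin d), MapClusterPt L (nhdsWithin 1 (Set.Ioi 1)) bar →
      ∀ w : EuclideanSpace ℝ (Fin d),
        ∑ i, l i * ‖x i - L‖ ≤ ∑ i, l i * ‖x i - w‖ := by
  intro L hL
  have hmin := isMinOn_univ_of_mapClusterPt (f := fun p z => ∑ i, l i * ‖x i - z‖ ^ p)
    nhdsWithin_le_nhds (continuousAt_sum_mul_norm_sub_rpow l x one_pos)
    (eventually_nhdsWithin_of_forall fun p hp => isMinOn_univ_iff.2 (hbar p hp)) hL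
  simpa only [Real.rpow_one] using isMinOn_univ_iff.1 hmin

/-- every cluster point of `x̄_p(x)` as `p → 1⁺` minimizes
`z ↦ ∑ i, λᵢ ‖xᵢ - z‖`. -/
theorem p_barycenter_limit_points_p_to_one
    (d N : ℕ) (hd : 1 ≤ d) (hN : 1 ≤ N)
    (l : Fin N → ℝ) (hl : ∀ i, 0 < l i) (hsum : ∑ i, l i = 1)
    (x : Fin N → EuclideanSpace ℝ (Fin d))
    (bar : ℝ → EuclideanSpace ℝ (Fin d))
    (hbar : ∀ p : ℝ, 1 < p → ∀ w : EuclideanSpace ℝ (Fin d),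
      ∑ i, l i * ‖x i - bar p‖ ^ p ≤ ∑ i, l i * ‖x i - w‖ ^ p) :
    ∀ L : EuclideanSpace ℝ (Fin d), MapClusterPt L (nhdsWithin 1 (Set.Ioi 1)) bar →
      ∀ w : EuclideanSpace ℝ (Fin d),
        ∑ i, l i * ‖x i - L‖ ≤ ∑ i, l i * ‖x i - w‖ :=
  p_barycenter_limit_points_p_to_one_general d N l x bar hbar
end

section
/- If γ_p is a minimizer of the multi-marginal problem ∫ c_p dγ over Π(μ₁,…,μ_N), then the pushforward ν_p := (x̄_p)_# γ_p is a minimizer of ν ↦ Σᵢ λᵢ W_p^p(μᵢ, ν), and moreover γᵢ := (πᵢ, x̄_p)_# γ_p is an optimal plan for W_p(μᵢ, ν_p) for every i. -/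
open Finset MeasureTheory
open scoped ENNReal

/-- The `p`-th power Wasserstein cost `W_p^p(μ,ν)` on `ℝ^d`. -/
noncomputable def wassersteinPPow (d : ℕ) (p : ℝ)
    (μ ν : Measure (EuclideanSpace ℝ (Fin d))) : ℝ≥0∞ :=
  ⨅ η : {η : Measure (EuclideanSpace ℝ (Fin d) × EuclideanSpace ℝ (Fin d)) //
      η.map Prod.fst = μ ∧ η.map Prod.snd = ν},
    ∫⁻ q, ENNReal.ofReal (‖q.1 - q.2‖ ^ p) ∂(η.1)

/-! Given any `ν` and couplings `ηᵢ` of `(μᵢ, ν)`, disintegrate each `ηᵢ` along `ν` and draw the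
`xᵢ` independently given `z ∼ ν`. The law of `x` is a multi-marginal plan, and since
`c_p(x) ≤ ∑ λᵢ |xᵢ - z|^p` its cost is at most `∑ λᵢ ∫ |x - z|^p dηᵢ`; optimizing over the `ηᵢ`,
`∫ c_p dγ_p ≤ ∑ λᵢ W_p^p(μᵢ, ν)`. Conversely the couplings `γᵢ` of `(μᵢ, ν_p)` have weighted total
cost exactly `∫ c_p dγ_p`, so `∑ λᵢ W_p^p(μᵢ, ν_p) ≤ ∫ c_p dγ_p`. This gives the minimality of
`ν_p`, and as `∫ c_p dγ_p` is finite by the moment bound, no `γᵢ` can be strictly suboptimal. -/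

open scoped NNReal

namespace ProbabilityTheory.Kernel

variable {ι α : Type*} [Fintype ι] {β : ι → Type*} [MeasurableSpace α] [∀ i, MeasurableSpace (β i)]

lemma measurable_measure_pi (κ : ∀ i, Kernel α (β i)) [∀ i, IsMarkovKernel (κ i)] :
    Measurable fun a => Measure.pi fun i => κ i a := by
  refine Measure.measurable_of_measurable_coe _ fun s hs => ?_
  refine MeasurableSpace.induction_on_inter
    (C := fun s _ => Measurable fun a => Measure.pi (fun i => κ i a) s)
    generateFrom_pi.symm isPiSystem_pi (by simp) ?_ ?_ ?_ s hs
  · rintro _ ⟨t, ht, rfl⟩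
    simp_rw [Measure.pi_pi]
    exact Finset.measurable_prod _ fun i _ => (κ i).measurable_coe (ht i (Set.mem_univ i))
  · intro t ht ih
    simp_rw [prob_compl_eq_one_sub ht]
    exact measurable_const.sub ih
  · intro f hd hm ih
    simp_rw [measure_iUnion hd hm]
    exact .tsum ih

noncomputable def pi (κ : ∀ i, Kernel α (β i)) [∀ i, IsMarkovKernel (κ i)] :
    Kernel α (∀ i, β i) where
  toFun a := Measure.pi fun i => κ i a
  measurable' := measurable_measure_pi κ

variable (κ : ∀ i, Kernel α (β i)) [∀ i, IsMarkovKernel (κ i)]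

instance : IsMarkovKernel (pi κ) := ⟨fun _ => inferInstanceAs (IsProbabilityMeasure (Measure.pi _))⟩

lemma map_pi_eval (i : ι) : (pi κ).map (Function.eval i) = κ i := by
  ext1 a
  rw [map_apply _ (measurable_pi_apply i)]
  exact (measurePreserving_eval _ i).map_eq

end ProbabilityTheory.Kernel

section Gluing

open ProbabilityTheory

variable {ι X Y : Type*} [Fintype ι] [MeasurableSpace X] [StandardBorelSpace X] [Nonempty X]
  [MeasurableSpace Y]

theorem exists_gluing_of_map_snd_eq {η : ι → Measure (X × Y)} [∀ i, IsFiniteMeasure (η i)]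
    {ν : Measure Y} (hη : ∀ i, (η i).map Prod.snd = ν) :
    ∃ π : Measure (Y × (ι → X)), ∀ i, π.map (fun q => (q.2 i, q.1)) = η i := by
  let κ i := ((η i).map Prod.swap).condKernel
  refine ⟨ν ⊗ₘ Kernel.pi κ, fun i => ?_⟩
  have hfst : ((η i).map Prod.swap).fst = ν := by
    rw [Measure.fst, Measure.map_map measurable_fst measurable_swap]
    exact hη i
  have : IsFiniteMeasure ν := hη i ▸ inferInstance
  calc (ν ⊗ₘ Kernel.pi κ).map (fun q => (q.2 i, q.1))
      = ((ν ⊗ₘ Kernel.pi κ).map (Prod.map id (Function.eval i))).map Prod.swap :=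
        (Measure.map_map measurable_swap (measurable_id.prodMap (measurable_pi_apply i))).symm
    _ = (ν ⊗ₘ κ i).map Prod.swap := by
        rw [← Measure.compProd_map (measurable_pi_apply i), Kernel.map_pi_eval]
    _ = η i := by
        rw [← hfst, Measure.disintegrate, Measure.map_map measurable_swap measurable_swap,
          Prod.swap_swap_eq, Measure.map_id]

end Gluing

namespace ENNReal

theorem le_sum_iInf_of_forall_le_sum {ι : Type*} [Fintype ι] {α : ι → Type*}
    {f : ∀ i, α i → ℝ≥0∞} {a : ℝ≥0∞} (h : ∀ x : ∀ i, α i, a ≤ ∑ i, f i (x i)) :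
    a ≤ ∑ i, ⨅ y, f i y := by
  classical
  by_cases hne : ∀ i, Nonempty (α i)
  · obtain ⟨x₀⟩ : Nonempty (∀ i, α i) := ⟨fun i => (hne i).some⟩
    calc a ≤ ⨅ x : ∀ i, α i, ∑ i, f i (x i) := le_iInf h
      _ = ∑ i, ⨅ x : ∀ i, α i, f i (x i) :=
        iInf_sum fun _ x x' => ⟨fun i => if f i (x i) ≤ f i (x' i) then x i else x' i,
          fun i _ => by dsimp only; split_ifs with hi <;> simp [hi, le_of_not_ge]⟩
      _ = ∑ i, ⨅ y, f i y := sum_congr rfl fun i _ =>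
        le_antisymm (le_iInf fun y => iInf_le_of_le (Function.update x₀ i y) (by simp))
          (le_iInf fun x => iInf_le _ _)
  · push Not at hne
    obtain ⟨i, hi⟩ := hne
    refine le_top.trans_eq (sum_eq_top.2 ⟨i, mem_univ i, ?_⟩).symm
    exact iInf_of_empty _

theorem eq_of_forall_le_of_sum_le_sum {ι : Type*} [Fintype ι] {f g : ι → ℝ≥0∞}
    (hfg : ∀ j, f j ≤ g j) (hgf : ∑ j, g j ≤ ∑ j, f j) (hg : ∑ j, g j ≠ ∞) (i : ι) :
    f i = g i := by
  classical
  refine le_antisymm (hfg i) ?_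
  have hrest : ∑ j ∈ univ.erase i, g j ≠ ∞ :=
    ne_top_of_le_ne_top hg (sum_le_sum_of_subset (erase_subset _ _))
  rw [← add_sum_erase _ _ (mem_univ i), ← add_sum_erase _ f (mem_univ i)] at hgf
  refine (ENNReal.add_le_add_iff_right hrest).1 (hgf.trans ?_)
  gcongr with j
  exact hfg j

end ENNReal

section Transport

variable {X Y : Type*} [MeasurableSpace X] [MeasurableSpace Y]

noncomputable def transportCost (c : X × Y → ℝ≥0∞) (μ : Measure X) (ν : Measure Y) : ℝ≥0∞ :=
  ⨅ η : {η : Measure (X × Y) // η.map Prod.fst = μ ∧ η.map Prod.snd = ν}, ∫⁻ q, c q ∂η.1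

theorem transportCost_le_lintegral {c : X × Y → ℝ≥0∞} {μ : Measure X} {ν : Measure Y}
    {η : Measure (X × Y)} (hμ : η.map Prod.fst = μ) (hν : η.map Prod.snd = ν) :
    transportCost c μ ν ≤ ∫⁻ q, c q ∂η :=
  iInf_le_of_le ⟨η, hμ, hν⟩ le_rfl

end Transport

theorem wassersteinPPow_eq_transportCost (d : ℕ) (p : ℝ)
    (μ ν : Measure (EuclideanSpace ℝ (Fin d))) :
    wassersteinPPow d p μ ν = transportCost (fun q => ENNReal.ofReal (‖q.1 - q.2‖ ^ p)) μ ν :=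
  rfl

section WeightedCost

variable {ι X Y : Type*} [Fintype ι]

/-- For `c(x, y) = |x - y|^p` the minimum over `y` is the multi-marginal cost `c_p(x)`, attained
at the barycenter `x̄_p(x)`. -/
noncomputable def weightedCost (c : X × Y → ℝ≥0∞) (w : ι → ℝ≥0) (x : ι → X) (y : Y) : ℝ≥0∞ :=
  ∑ i, w i * c (x i, y)

theorem ofReal_sum_mul_eq_weightedCost {c : X × Y → ℝ} (hc : ∀ q, 0 ≤ c q) {l : ι → ℝ}
    (hl : ∀ i, 0 ≤ l i) (x : ι → X) (y : Y) :
    ENNReal.ofReal (∑ i, l i * c (x i, y))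
      = weightedCost (fun q => ENNReal.ofReal (c q)) (fun i => (l i).toNNReal) x y := by
  rw [ENNReal.ofReal_sum_of_nonneg fun i _ => mul_nonneg (hl i) (hc _)]
  exact sum_congr rfl fun i _ => ENNReal.ofReal_mul (hl i)

variable [MeasurableSpace X] [MeasurableSpace Y] {Z : Type*} [MeasurableSpace Z]
  {c : X × Y → ℝ≥0∞} (w : ι → ℝ≥0)

theorem Measurable.weightedCost (hc : Measurable c) {f : Z → ι → X} {g : Z → Y}
    (hf : Measurable f) (hg : Measurable g) :
    Measurable fun z => weightedCost c w (f z) (g z) :=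
  Finset.measurable_sum _ fun i _ =>
    (hc.comp ((measurable_pi_apply i).comp hf |>.prodMk hg)).const_mul _

theorem lintegral_weightedCost (hc : Measurable c) (π : Measure Z) {f : Z → ι → X} {g : Z → Y}
    (hf : Measurable f) (hg : Measurable g) :
    ∫⁻ z, weightedCost c w (f z) (g z) ∂π
      = ∑ i, w i * ∫⁻ q, c q ∂(π.map fun z => (f z i, g z)) := by
  have hfi : ∀ i, Measurable fun z => (f z i, g z) :=
    fun i => (measurable_pi_apply i).comp hf |>.prodMk hg
  have hterm : ∀ i, Measurable fun z => (w i : ℝ≥0∞) * c (f z i, g z) :=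
    fun i => (hc.comp (hfi i)).const_mul _
  simp only [weightedCost]
  rw [lintegral_finsetSum _ fun i _ => hterm i]
  refine sum_congr rfl fun i _ => ?_
  rw [lintegral_map hc (hfi i), lintegral_const_mul' _ _ ENNReal.coe_ne_top]

end WeightedCost

section MultiMarginal

variable {ι X Y : Type*} [Fintype ι] [MeasurableSpace X] [MeasurableSpace Y]
  {c : X × Y → ℝ≥0∞} (hc : Measurable c) (w : ι → ℝ≥0)
  {bar : (ι → X) → Y} (hbar : Measurable bar)
  {μ : ι → Measure X} {γ : Measure (ι → X)} (hγ : ∀ i, γ.map (fun x => x i) = μ i)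
include hc hbar hγ

omit [Fintype ι] hc in
theorem transportCost_map_le_lintegral_map (i : ι) :
    transportCost c (μ i) (γ.map bar) ≤ ∫⁻ q, c q ∂(γ.map fun x => (x i, bar x)) :=
  transportCost_le_lintegral ((Measure.fst_map_prodMk hbar).trans (hγ i))
    (Measure.snd_map_prodMk (measurable_pi_apply i))

theorem sum_transportCost_map_le_lintegral_weightedCost :
    ∑ i, w i * transportCost c (μ i) (γ.map bar) ≤ ∫⁻ x, weightedCost c w x (bar x) ∂γ := by
  rw [lintegral_weightedCost w hc γ measurable_id' hbar]
  gcongr with i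
  exact transportCost_map_le_lintegral_map hbar hγ i

omit hbar in
theorem lintegral_weightedCost_le_sum_lintegral (y₀ : Y)
    (hmin : ∀ x y, weightedCost c w x (bar x) ≤ weightedCost c w x y) :
    ∫⁻ x, weightedCost c w x (bar x) ∂γ ≤ ∑ i, w i * ∫⁻ x, c (x, y₀) ∂μ i := by
  calc ∫⁻ x, weightedCost c w x (bar x) ∂γ ≤ ∫⁻ x, weightedCost c w x y₀ ∂γ :=
        lintegral_mono fun x => hmin x y₀
    _ = ∑ i, w i * ∫⁻ x, c (x, y₀) ∂μ i := by
        rw [lintegral_weightedCost w hc γ measurable_id' measurable_const]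
        refine sum_congr rfl fun i _ => ?_
        have hi : Measurable fun x : ι → X => x i := measurable_pi_apply i
        rw [← hγ i, lintegral_map hc (hi.prodMk measurable_const),
          lintegral_map (f := fun x => c (x, y₀)) (by fun_prop) hi]

variable [StandardBorelSpace X] [Nonempty X] [∀ i, IsFiniteMeasure (μ i)] (hw : ∀ i, w i ≠ 0)
  (hmin : ∀ x y, weightedCost c w x (bar x) ≤ weightedCost c w x y)
  (hopt : ∀ γ' : Measure (ι → X), (∀ i, γ'.map (fun x => x i) = μ i) →
    ∫⁻ x, weightedCost c w x (bar x) ∂γ ≤ ∫⁻ x, weightedCost c w x (bar x) ∂γ')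
include hw hmin hopt

omit hγ in
theorem lintegral_weightedCost_le_sum_transportCost (ν : Measure Y) :
    ∫⁻ x, weightedCost c w x (bar x) ∂γ ≤ ∑ i, w i * transportCost c (μ i) ν := by
  simp_rw [transportCost,
    ENNReal.mul_iInf_of_ne (ENNReal.coe_ne_zero.2 (hw _)) ENNReal.coe_ne_top]
  refine ENNReal.le_sum_iInf_of_forall_le_sum fun η => ?_
  have : ∀ i, IsFiniteMeasure (η i).1 := fun i => by
    have : IsFiniteMeasure ((η i).1.map Prod.fst) := by rw [(η i).2.1]; infer_instance
    exact Measure.isFiniteMeasure_of_map measurable_fst.aemeasurable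
  obtain ⟨π, hπ⟩ := exists_gluing_of_map_snd_eq (η := fun i => (η i).1) fun i => (η i).2.2
  have hmarg : ∀ i, (π.map Prod.snd).map (fun x => x i) = μ i := fun i => by
    rw [Measure.map_map (measurable_pi_apply i) measurable_snd, ← (η i).2.1, ← hπ i,
      Measure.map_map measurable_fst (by fun_prop)]
    rfl
  calc ∫⁻ x, weightedCost c w x (bar x) ∂γ
      ≤ ∫⁻ x, weightedCost c w x (bar x) ∂(π.map Prod.snd) := hopt _ hmarg
    _ = ∫⁻ q, weightedCost c w q.2 (bar q.2) ∂π :=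
        lintegral_map (hc.weightedCost w measurable_id hbar) measurable_snd
    _ ≤ ∫⁻ q, weightedCost c w q.2 q.1 ∂π := lintegral_mono fun q => hmin _ _
    _ = ∑ i, w i * ∫⁻ q, c q ∂(η i).1 := by
        rw [lintegral_weightedCost w hc π measurable_snd measurable_fst]
        simp_rw [hπ]

/-- The sum in `sum_transportCost_map_le_lintegral_weightedCost` is an equality (take
`ν = γ.map bar` above), and a finite sum of termwise inequalities that is an equality is one
termwise. -/
theorem lintegral_map_eq_transportCost_map
    (hfin : ∫⁻ x, weightedCost c w x (bar x) ∂γ ≠ ∞) (i : ι) :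
    ∫⁻ q, c q ∂(γ.map fun x => (x i, bar x)) = transportCost c (μ i) (γ.map bar) := by
  have hsplit := lintegral_weightedCost w hc γ measurable_id' hbar
  refine ((ENNReal.mul_right_inj (ENNReal.coe_ne_zero.2 (hw i)) ENNReal.coe_ne_top).1
    (ENNReal.eq_of_forall_le_of_sum_le_sum (f := fun j => w j * transportCost c (μ j) (γ.map bar))
      (fun j => ?_) ?_ (hsplit ▸ hfin) i)).symm
  · exact mul_le_mul_right (transportCost_map_le_lintegral_map hbar hγ j) _
  · exact hsplit ▸ lintegral_weightedCost_le_sum_transportCost hc w hbar hw hmin hopt _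

end MultiMarginal

theorem pushforward_of_multimarginal_optimal_is_barycenter_general
    (d N : ℕ) (p : ℝ)
    (l : Fin N → ℝ) (hl : ∀ i, 0 < l i)
    (μ : Fin N → Measure (EuclideanSpace ℝ (Fin d)))
    (hprob : ∀ i, IsProbabilityMeasure (μ i))
    (hmom : ∀ i, ∫⁻ y, ENNReal.ofReal (‖y‖ ^ p) ∂(μ i) < ⊤)
    (bar : (Fin N → EuclideanSpace ℝ (Fin d)) → EuclideanSpace ℝ (Fin d))
    (hbar : ∀ x, ∀ w : EuclideanSpace ℝ (Fin d),
      ∑ i, l i * ‖x i - bar x‖ ^ p ≤ ∑ i, l i * ‖x i - w‖ ^ p)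
    (hbarm : Measurable bar)
    (γp : Measure (Fin N → EuclideanSpace ℝ (Fin d)))
    (hγp : ∀ i, γp.map (fun x => x i) = μ i)
    (hopt : ∀ γ' : Measure (Fin N → EuclideanSpace ℝ (Fin d)),
      (∀ i, γ'.map (fun x => x i) = μ i) →
      (∫⁻ x, ENNReal.ofReal (∑ i, l i * ‖x i - bar x‖ ^ p) ∂γp)
        ≤ ∫⁻ x, ENNReal.ofReal (∑ i, l i * ‖x i - bar x‖ ^ p) ∂γ') :
    (∀ ν : Measure (EuclideanSpace ℝ (Fin d)), IsProbabilityMeasure ν →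
      ∑ i, ENNReal.ofReal (l i) * wassersteinPPow d p (μ i) (γp.map bar)
        ≤ ∑ i, ENNReal.ofReal (l i) * wassersteinPPow d p (μ i) ν) ∧
    (∀ i, (γp.map (fun x => (x i, bar x))).map Prod.fst = μ i ∧
      (γp.map (fun x => (x i, bar x))).map Prod.snd = γp.map bar ∧
      (∫⁻ q, ENNReal.ofReal (‖q.1 - q.2‖ ^ p) ∂(γp.map (fun x => (x i, bar x))))
        = wassersteinPPow d p (μ i) (γp.map bar)) := by
  simp only [wassersteinPPow_eq_transportCost]
  let c : EuclideanSpace ℝ (Fin d) × EuclideanSpace ℝ (Fin d) → ℝ≥0∞ :=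
    fun q => ENNReal.ofReal (‖q.1 - q.2‖ ^ p)
  let w i := (l i).toNNReal
  have hc : Measurable c := by fun_prop
  have hw : ∀ i, w i ≠ 0 := fun i => (Real.toNNReal_pos.2 (hl i)).ne'
  have hC : ∀ x y, ENNReal.ofReal (∑ i, l i * ‖x i - y‖ ^ p) = weightedCost c w x y :=
    ofReal_sum_mul_eq_weightedCost (c := fun q => ‖q.1 - q.2‖ ^ p) (fun _ => by positivity)
      fun i => (hl i).le
  have hmin : ∀ x y, weightedCost c w x (bar x) ≤ weightedCost c w x y := fun x y => by
    simpa only [hC] using ENNReal.ofReal_le_ofReal (hbar x y)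
  simp only [hC] at hopt
  have hfin : ∫⁻ x, weightedCost c w x (bar x) ∂γp ≠ ∞ := by
    refine ((lintegral_weightedCost_le_sum_lintegral hc w hγp 0 hmin).trans_lt ?_).ne
    exact ENNReal.sum_lt_top.2 fun i _ =>
      ENNReal.mul_lt_top ENNReal.coe_lt_top (by simpa [c] using hmom i)
  refine ⟨fun ν _ => (sum_transportCost_map_le_lintegral_weightedCost hc w hbarm hγp).trans
      (lintegral_weightedCost_le_sum_transportCost hc w hbarm hw hmin hopt ν), fun i =>
    ⟨(Measure.fst_map_prodMk hbarm).trans (hγp i),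
      Measure.snd_map_prodMk (measurable_pi_apply i),
      lintegral_map_eq_transportCost_map hc w hbarm hγp hw hmin hopt hfin i⟩⟩

/-- if `γ_p` minimizes the multi-marginal problem, then
`ν_p = (x̄_p)_# γ_p` minimizes `ν ↦ ∑ i, λᵢ W_p^p(μᵢ,ν)`, and
`γᵢ = (πᵢ, x̄_p)_# γ_p` is an optimal plan for `W_p(μᵢ, ν_p)` for every `i`. -/
theorem pushforward_of_multimarginal_optimal_is_barycenter
    (d N : ℕ) (hd : 1 ≤ d) (hN : 1 ≤ N) (p : ℝ) (hp : 1 < p)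
    (l : Fin N → ℝ) (hl : ∀ i, 0 < l i) (hsum : ∑ i, l i = 1)
    (μ : Fin N → Measure (EuclideanSpace ℝ (Fin d)))
    (hprob : ∀ i, IsProbabilityMeasure (μ i))
    (hmom : ∀ i, ∫⁻ y, ENNReal.ofReal (‖y‖ ^ p) ∂(μ i) < ⊤)
    (bar : (Fin N → EuclideanSpace ℝ (Fin d)) → EuclideanSpace ℝ (Fin d))
    (hbar : ∀ x, ∀ w : EuclideanSpace ℝ (Fin d),
      ∑ i, l i * ‖x i - bar x‖ ^ p ≤ ∑ i, l i * ‖x i - w‖ ^ p)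
    (hbarm : Measurable bar)
    (γp : Measure (Fin N → EuclideanSpace ℝ (Fin d)))
    (hγp : ∀ i, γp.map (fun x => x i) = μ i)
    (hopt : ∀ γ' : Measure (Fin N → EuclideanSpace ℝ (Fin d)),
      (∀ i, γ'.map (fun x => x i) = μ i) →
      (∫⁻ x, ENNReal.ofReal (∑ i, l i * ‖x i - bar x‖ ^ p) ∂γp)
        ≤ ∫⁻ x, ENNReal.ofReal (∑ i, l i * ‖x i - bar x‖ ^ p) ∂γ') :
    (∀ ν : Measure (EuclideanSpace ℝ (Fin d)), IsProbabilityMeasure ν →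
      ∑ i, ENNReal.ofReal (l i) * wassersteinPPow d p (μ i) (γp.map bar)
        ≤ ∑ i, ENNReal.ofReal (l i) * wassersteinPPow d p (μ i) ν) ∧
    (∀ i, (γp.map (fun x => (x i, bar x))).map Prod.fst = μ i ∧
      (γp.map (fun x => (x i, bar x))).map Prod.snd = γp.map bar ∧
      (∫⁻ q, ENNReal.ofReal (‖q.1 - q.2‖ ^ p) ∂(γp.map (fun x => (x i, bar x))))
        = wassersteinPPow d p (μ i) (γp.map bar)) :=
  pushforward_of_multimarginal_optimal_is_barycenter_general d N p l hl μ hprob hmom bar hbar hbarm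
    γp hγp hopt
end

section
/- Let p ≥ 2 and let S ⊊ {1,…,N}. If x = (x₁,…,x_N) satisfies x̄_p(x) = xᵢ for every i ∈ S and x̄_p(x) ≠ x_j for every j ∉ S, then x̄_p(x) equals the reduced barycenter argmin_{z∈ℝ^d} Σ_{j∉S} λⱼ |x_j - z|^p; in particular xᵢ is this reduced minimizer for each i ∈ S. -/
/-!
Since `z = xᵢ` for `i ∈ S`, the full functional is the reduced one plus `(∑_{i ∈ S} λᵢ) ‖z - v‖^p`.
Moving from `z` a fraction `t` of the way towards any `w`, this extra term is of order `t^p`,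
while by convexity the reduced functional drops by at least `t` times its excess at `z` over `w`.
Minimality of the full functional at `z` then bounds that excess by `O(t^(p-1))`, which tends to
`0` since `p > 1`.
-/

open Finset Set Filter Topology

theorem ConvexOn.sum {𝕜 E β ι : Type*} [Semiring 𝕜] [PartialOrder 𝕜] [AddCommMonoid E]
    [AddCommMonoid β] [PartialOrder β] [IsOrderedAddMonoid β] [SMul 𝕜 E] [Module 𝕜 β]
    {s : Set E} {t : Finset ι} {f : ι → E → β}
    (hs : Convex 𝕜 s) (hf : ∀ i ∈ t, ConvexOn 𝕜 s (f i)) :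
    ConvexOn 𝕜 s fun x => ∑ i ∈ t, f i x := by
  classical
  induction t using Finset.induction_on with
  | empty => simpa using convexOn_const (0 : β) hs
  | insert i t hi ih =>
    simp only [Finset.sum_insert hi]
    exact (hf i (mem_insert_self i t)).add (ih fun j hj => hf j (mem_insert_of_mem hj))

theorem convexOn_norm_sub_rpow {E : Type*} [SeminormedAddCommGroup E] [NormedSpace ℝ E]
    (a : E) {p : ℝ} (hp : 1 ≤ p) : ConvexOn ℝ univ fun v : E => ‖a - v‖ ^ p := by
  refine ⟨convex_univ, fun v _ w _ α β hα hβ hαβ => ?_⟩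
  have htri : ‖a - (α • v + β • w)‖ ≤ α * ‖a - v‖ + β * ‖a - w‖ := by
    have : a - (α • v + β • w) = α • (a - v) + β • (a - w) := by
      linear_combination (norm := module) (-hαβ) • a
    rw [this]
    refine (norm_add_le _ _).trans_eq ?_
    rw [norm_smul_of_nonneg hα, norm_smul_of_nonneg hβ]
  calc ‖a - (α • v + β • w)‖ ^ p ≤ (α * ‖a - v‖ + β * ‖a - w‖) ^ p :=
        Real.rpow_le_rpow (norm_nonneg _) htri (by linarith)
    _ ≤ α • ‖a - v‖ ^ p + β • ‖a - w‖ ^ p :=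
        (convexOn_rpow hp).2 (norm_nonneg _) (norm_nonneg _) hα hβ hαβ

theorem nonpos_of_forall_mul_le_mul_rpow {a K p : ℝ} (hp : 1 < p)
    (h : ∀ t, 0 < t → t ≤ 1 → t * a ≤ K * t ^ p) : a ≤ 0 := by
  have hlim : Tendsto (fun t : ℝ => K * t ^ (p - 1)) (𝓝[>] 0) (𝓝 0) := by
    have : ContinuousAt (fun t : ℝ => K * t ^ (p - 1)) 0 :=
      continuousAt_const.mul (Real.continuousAt_rpow_const _ _ (Or.inr (by linarith)))
    simpa [Real.zero_rpow (by linarith : p - 1 ≠ 0)] using this.tendsto.mono_left nhdsWithin_le_nhds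
  refine ge_of_tendsto hlim ?_
  filter_upwards [Ioo_mem_nhdsGT one_pos] with t ⟨ht0, ht1⟩
  have hpow : t ^ p = t * t ^ (p - 1) := by
    rw [← Real.rpow_one_add' ht0.le (by linarith)]; ring_nf
  have := h t ht0 ht1.le
  rw [hpow, mul_left_comm] at this
  exact le_of_mul_le_mul_left this ht0

theorem ConvexOn.le_of_forall_le_add_mul_norm_sub_rpow {E : Type*} [SeminormedAddCommGroup E]
    [NormedSpace ℝ E] {f : E → ℝ} (hf : ConvexOn ℝ univ f) {c p : ℝ} (hp : 1 < p) {z : E}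
    (hz : ∀ v, f z ≤ f v + c * ‖z - v‖ ^ p) (w : E) : f z ≤ f w := by
  suffices f z - f w ≤ 0 by linarith
  refine nonpos_of_forall_mul_le_mul_rpow (K := c * ‖z - w‖ ^ p) hp fun t ht0 ht1 => ?_
  have hdist : ‖z - ((1 - t) • z + t • w)‖ = t * ‖z - w‖ := by
    rw [show z - ((1 - t) • z + t • w) = t • (z - w) by module, norm_smul_of_nonneg ht0.le]
  have hconv : f ((1 - t) • z + t • w) ≤ (1 - t) * f z + t * f w :=
    hf.2 trivial trivial (by linarith) ht0.le (by ring)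
  have := hz ((1 - t) • z + t • w)
  rw [hdist, Real.mul_rpow ht0.le (norm_nonneg _)] at this
  nlinarith

theorem reduced_barycenter_general
    (d N : ℕ) (p : ℝ) (hp : 2 ≤ p)
    (l : Fin N → ℝ) (hl : ∀ i, 0 < l i)
    (x : Fin N → EuclideanSpace ℝ (Fin d)) (z : EuclideanSpace ℝ (Fin d))
    (hz : ∀ w : EuclideanSpace ℝ (Fin d),
      ∑ i, l i * ‖x i - z‖ ^ p ≤ ∑ i, l i * ‖x i - w‖ ^ p)
    (S : Finset (Fin N))
    (hSeq : ∀ i ∈ S, z = x i) :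
    (∀ w : EuclideanSpace ℝ (Fin d),
      ∑ j ∈ Sᶜ, l j * ‖x j - z‖ ^ p ≤ ∑ j ∈ Sᶜ, l j * ‖x j - w‖ ^ p) ∧
    ∀ i ∈ S, ∀ w : EuclideanSpace ℝ (Fin d),
      ∑ j ∈ Sᶜ, l j * ‖x j - x i‖ ^ p ≤ ∑ j ∈ Sᶜ, l j * ‖x j - w‖ ^ p := by
  have hconv : ConvexOn ℝ univ fun v => ∑ j ∈ Sᶜ, l j * ‖x j - v‖ ^ p :=
    ConvexOn.sum convex_univ fun j _ => (convexOn_norm_sub_rpow (x j) (by linarith)).smul (hl j).le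
  have hsplit : ∀ v, ∑ i, l i * ‖x i - v‖ ^ p =
      ∑ j ∈ Sᶜ, l j * ‖x j - v‖ ^ p + (∑ i ∈ S, l i) * ‖z - v‖ ^ p := by
    intro v
    rw [← sum_add_sum_compl S, add_comm, sum_mul]
    exact congrArg _ (sum_congr rfl fun i hi => by rw [hSeq i hi])
  have hreduced : ∀ w, ∑ j ∈ Sᶜ, l j * ‖x j - z‖ ^ p ≤ ∑ j ∈ Sᶜ, l j * ‖x j - w‖ ^ p := by
    refine hconv.le_of_forall_le_add_mul_norm_sub_rpow (c := ∑ i ∈ S, l i) (by linarith)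
      fun v => ?_
    simpa [hsplit, Real.zero_rpow (by linarith : p ≠ 0)] using hz v
  exact ⟨hreduced, fun i hi => hSeq i hi ▸ hreduced⟩

/-- for `p ≥ 2` and a proper subset `S ⊊ {1,…,N}`, if
`x̄_p(x) = xᵢ` for every `i ∈ S` and `x̄_p(x) ≠ x_j` for `j ∉ S`, then `x̄_p(x)`
minimizes the reduced functional `z ↦ ∑_{j ∉ S} λⱼ ‖x_j - z‖^p`; in particular
each `xᵢ`, `i ∈ S`, is the reduced minimizer. -/
theorem reduced_barycenter
    (d N : ℕ) (hd : 1 ≤ d) (hN : 1 ≤ N) (p : ℝ) (hp : 2 ≤ p)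
    (l : Fin N → ℝ) (hl : ∀ i, 0 < l i) (hsum : ∑ i, l i = 1)
    (x : Fin N → EuclideanSpace ℝ (Fin d)) (z : EuclideanSpace ℝ (Fin d))
    (hz : ∀ w : EuclideanSpace ℝ (Fin d),
      ∑ i, l i * ‖x i - z‖ ^ p ≤ ∑ i, l i * ‖x i - w‖ ^ p)
    (S : Finset (Fin N)) (hS : S ≠ Finset.univ)
    (hSeq : ∀ i ∈ S, z = x i) (hSne : ∀ j ∉ S, z ≠ x j) :
    (∀ w : EuclideanSpace ℝ (Fin d),
      ∑ j ∈ Sᶜ, l j * ‖x j - z‖ ^ p ≤ ∑ j ∈ Sᶜ, l j * ‖x j - w‖ ^ p) ∧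
    ∀ i ∈ S, ∀ w : EuclideanSpace ℝ (Fin d),
      ∑ j ∈ Sᶜ, l j * ‖x j - x i‖ ^ p ≤ ∑ j ∈ Sᶜ, l j * ‖x j - w‖ ^ p :=
  reduced_barycenter_general d N p hp l hl x z hz S hSeq
end

section
/- Let γ be a coupling of μ₁,…,μ_N on ℝ^{Nd}, and let S ⊆ {1,…,N} be nonempty with i ∈ S. Let D_S := {x : x̄_p(x) = xⱼ for all j ∈ S, x̄_p(x) ≠ xⱼ for j ∉ S}. If E ⊂ ℝ^d has diameter < δ, then πⁱ(x̄_p⁻¹(E) ∩ D_S) has diameter < δ; consequently, if 𝓛^d(E) = 0 then 𝓗^d(πⁱ(x̄_p⁻¹(E) ∩ D_S)) = 0. -/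
open Finset MeasureTheory
open scoped ENNReal

/-! On `D_S` with `i ∈ S` the barycenter coincides with the `i`-th point, so the projection
`πⁱ(x̄_p⁻¹(E) ∩ D_S)` is contained in `E`. Both claims then follow by monotonicity, the second
because `𝓗^d` is an additive Haar measure on `ℝ^d` and hence absolutely continuous with respect
to Lebesgue measure. -/

theorem Set.image_eval_preimage_inter_subset {ι α : Type*} {f : (ι → α) → α}
    {D : Set (ι → α)} {i : ι} (hD : ∀ x ∈ D, f x = x i) (E : Set α) :
    (fun x => x i) '' (f ⁻¹' E ∩ D) ⊆ E := by
  rintro _ ⟨x, ⟨hxE, hxD⟩, rfl⟩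
  rw [Set.mem_preimage, hD x hxD] at hxE
  exact hxE

theorem MeasureTheory.hausdorffMeasure_euclideanSpace_absolutelyContinuous_volume (d : ℕ) :
    (μH[d] : Measure (EuclideanSpace ℝ (Fin d))) ≪ volume :=
  Measure.absolutelyContinuous_isAddHaarMeasure _ _

theorem projection_of_singular_set_general
    (d N : ℕ)
    (bar : (Fin N → EuclideanSpace ℝ (Fin d)) → EuclideanSpace ℝ (Fin d))
    (S : Set (Fin N)) (i : Fin N) (hi : i ∈ S)
    (DS : Set (Fin N → EuclideanSpace ℝ (Fin d)))
    (hDS : DS = {x | (∀ j ∈ S, bar x = x j) ∧ ∀ j ∉ S, bar x ≠ x j})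
    (E : Set (EuclideanSpace ℝ (Fin d))) :
    (∀ δ : ℝ≥0∞, 0 < δ → EMetric.diam E < δ →
      EMetric.diam ((fun x => x i) '' (bar ⁻¹' E ∩ DS)) < δ) ∧
    (volume E = 0 →
      μH[(d : ℝ)] ((fun x => x i) '' (bar ⁻¹' E ∩ DS)) = 0) := by
  have hsub : (fun x => x i) '' (bar ⁻¹' E ∩ DS) ⊆ E :=
    Set.image_eval_preimage_inter_subset (fun x hx => (hDS ▸ hx).1 i hi) E
  exact ⟨fun δ _ hδ => (Metric.ediam_mono hsub).trans_lt hδ, fun hE =>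
    measure_mono_null hsub (hausdorffMeasure_euclideanSpace_absolutelyContinuous_volume d hE)⟩

/-- for a coupling `γ` of `μ₁,…,μ_N`, a nonempty `S` and `i ∈ S`,
with `D_S = {x : x̄_p(x) = xⱼ ∀ j ∈ S, x̄_p(x) ≠ xⱼ ∀ j ∉ S}`: if `E` has
diameter `< δ` then `πⁱ(x̄_p⁻¹(E) ∩ D_S)` has diameter `< δ`; consequently if
`𝓛^d(E) = 0` then `𝓗^d(πⁱ(x̄_p⁻¹(E) ∩ D_S)) = 0`. -/
theorem projection_of_singular_set
    (d N : ℕ) (hd : 1 ≤ d) (hN : 1 ≤ N) (p : ℝ) (hp : 1 < p)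
    (l : Fin N → ℝ) (hl : ∀ i, 0 < l i) (hsum : ∑ i, l i = 1)
    (bar : (Fin N → EuclideanSpace ℝ (Fin d)) → EuclideanSpace ℝ (Fin d))
    (hbar : ∀ x, ∀ w : EuclideanSpace ℝ (Fin d),
      ∑ i, l i * ‖x i - bar x‖ ^ p ≤ ∑ i, l i * ‖x i - w‖ ^ p)
    (μ : Fin N → Measure (EuclideanSpace ℝ (Fin d)))
    (hprob : ∀ i, IsProbabilityMeasure (μ i))
    (γ : Measure (Fin N → EuclideanSpace ℝ (Fin d)))
    (hγ : ∀ i, γ.map (fun x => x i) = μ i)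
    (S : Set (Fin N)) (hS : S.Nonempty) (i : Fin N) (hi : i ∈ S)
    (DS : Set (Fin N → EuclideanSpace ℝ (Fin d)))
    (hDS : DS = {x | (∀ j ∈ S, bar x = x j) ∧ ∀ j ∉ S, bar x ≠ x j})
    (E : Set (EuclideanSpace ℝ (Fin d))) :
    (∀ δ : ℝ≥0∞, 0 < δ → EMetric.diam E < δ →
      EMetric.diam ((fun x => x i) '' (bar ⁻¹' E ∩ DS)) < δ) ∧
    (volume E = 0 →
      μH[(d : ℝ)] ((fun x => x i) '' (bar ⁻¹' E ∩ DS)) = 0) :=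
  projection_of_singular_set_general d N bar S i hi DS hDS E
end

section
/- Let μ, ν be Borel probability measures on ℝ with finite p-th moments and inverse distribution functions F⁻¹, G⁻¹. Then W_p(μ,ν)^p = ∫₀¹ |F⁻¹(y) − G⁻¹(y)|^p dy, where F⁻¹(t) = inf{y : F(y) ≥ t} and F(x) = μ((−∞,x]). -/
/-!
For `s < u` put `ψ(s, u) = p (p - 1) (u - s) ^ (p - 2)`. Integrating `ψ` over the rectangle
`{y ≤ s, u ≤ x}` gives `(x - y) ^ p` when `y ≤ x` and `0` otherwise, so by Tonelli the cost of a
coupling `(X, Y) ∼ η` of `μ` and `ν` is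
`∫∫ ψ(s, u) (η {X ≥ u, Y ≤ s} + η {Y ≥ u, X ≤ s}) ds du`.
For every coupling `η {X ≥ u, Y ≤ s} ≥ G(s) - F(u⁻)`, and the quantile coupling
`t ↦ (F⁻¹ t, G⁻¹ t)` on `(0, 1)` attains this bound (and the symmetric one): since both quantile
functions are monotone, the events `{G⁻¹ ≤ s}` and `{F⁻¹ < u}` are nested initial segments of
`(0, 1)`.
-/

open MeasureTheory Set ProbabilityTheory Filter Topology
open scoped ENNReal

namespace OneDimensionalTransport

section Comonotone

variable {α β γ : Type*} [LinearOrder α] [Preorder β] [Preorder γ] {I : Set α}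
  {f : α → β} {g : α → γ} {J : Set β} {K : Set γ}

lemma ordConnected_inter_preimage_of_monotoneOn (hI : I.OrdConnected) (hf : MonotoneOn f I)
    (hJ : IsLowerSet J) : (I ∩ f ⁻¹' J).OrdConnected :=
  ⟨fun _ ha _ hb _ hc => ⟨hI.out ha.1 hb.1 hc, hJ (hf (hI.out ha.1 hb.1 hc) hb.1 hc.2) hb.2⟩⟩

lemma inter_preimage_subset_total_of_monotoneOn (hf : MonotoneOn f I) (hg : MonotoneOn g I)
    (hJ : IsLowerSet J) (hK : IsLowerSet K) :
    I ∩ f ⁻¹' J ⊆ I ∩ g ⁻¹' K ∨ I ∩ g ⁻¹' K ⊆ I ∩ f ⁻¹' J := by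
  by_contra! h
  obtain ⟨⟨a, ha, haK⟩, ⟨b, hb, hbJ⟩⟩ := And.intro (not_subset.1 h.1) (not_subset.1 h.2)
  rcases le_total a b with hab | hba
  · exact haK ⟨ha.1, hK (hg ha.1 hb.1 hab) hb.2⟩
  · exact hbJ ⟨hb.1, hJ (hf hb.1 ha.1 hba) ha.2⟩

end Comonotone

lemma measure_sdiff_of_subset_total {α : Type*} [MeasurableSpace α] {μ : Measure α}
    {s t : Set α} (ht : MeasurableSet t) (ht_ne_top : μ t ≠ ∞) (h : s ⊆ t ∨ t ⊆ s) :
    μ (s \ t) = μ s - μ t := by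
  rcases h with hst | hts
  · rw [sdiff_eq_empty.2 hst, measure_empty, tsub_eq_zero_of_le (measure_mono hst)]
  · exact measure_sdiff hts ht.nullMeasurableSet ht_ne_top

lemma isProbabilityMeasure_of_fst_eq {α β : Type*} [MeasurableSpace α] [MeasurableSpace β]
    {η : Measure (α × β)} {μ : Measure α} [IsProbabilityMeasure μ] (h : η.fst = μ) :
    IsProbabilityMeasure η :=
  ⟨by rw [← Measure.fst_univ, h, measure_univ]⟩

lemma sub_le_measure_Ici_prod_Iic {η : Measure (ℝ × ℝ)} {μ ν : Measure ℝ} (hμ : η.fst = μ)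
    (hν : η.snd = ν) (s u : ℝ) : ν (Iic s) - μ (Iio u) ≤ η (Ici u ×ˢ Iic s) := by
  rw [← hμ, ← hν, Measure.fst_apply measurableSet_Iio, Measure.snd_apply measurableSet_Iic,
    tsub_le_iff_right]
  calc η (Prod.snd ⁻¹' Iic s) ≤ η (Ici u ×ˢ Iic s ∪ Prod.fst ⁻¹' Iio u) :=
        measure_mono fun q hq => (lt_or_ge q.1 u).elim Or.inr fun hu => Or.inl ⟨hu, hq⟩
    _ ≤ η (Ici u ×ˢ Iic s) + η (Prod.fst ⁻¹' Iio u) := measure_union_le _ _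

section Rectangles

lemma measurableSet_setOf_mem_Ici_prod_Iic :
    MeasurableSet {z : (ℝ × ℝ) × (ℝ × ℝ) | z.2 ∈ Ici z.1.2 ×ˢ Iic z.1.1} :=
  (measurableSet_le measurable_fst.snd measurable_snd.fst).inter
    (measurableSet_le measurable_snd.snd measurable_fst.fst)

variable (η ρ : Measure (ℝ × ℝ)) [SFinite η] [SFinite ρ]

lemma measurable_measure_Ici_prod_Iic : Measurable fun q : ℝ × ℝ => ρ (Ici q.2 ×ˢ Iic q.1) :=
  measurable_measure_prodMk_left measurableSet_setOf_mem_Ici_prod_Iic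

lemma lintegral_measure_Ici_prod_Iic_comm :
    ∫⁻ q, ρ (Ici q.2 ×ˢ Iic q.1) ∂η = ∫⁻ su, η (Ici su.2 ×ˢ Iic su.1) ∂ρ :=
  calc ∫⁻ q, ρ (Ici q.2 ×ˢ Iic q.1) ∂η = η.prod ρ _ :=
        (Measure.prod_apply measurableSet_setOf_mem_Ici_prod_Iic).symm
    _ = ∫⁻ su, η (Ici su.2 ×ˢ Iic su.1) ∂ρ := by
      rw [Measure.prod_apply_symm measurableSet_setOf_mem_Ici_prod_Iic]
      exact lintegral_congr fun su => congrArg η (ext fun q => and_comm)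

end Rectangles

lemma integral_mul_rpow_sub_one {r : ℝ} (hr : 0 < r) (c : ℝ) :
    ∫ v in (0 : ℝ)..c, r * v ^ (r - 1) = c ^ r := by
  rw [intervalIntegral.integral_const_mul, integral_rpow (Or.inl (by linarith)),
    sub_add_cancel, Real.zero_rpow hr.ne', sub_zero]
  field_simp

lemma setLIntegral_Ioc_ofReal {f : ℝ → ℝ} {a b : ℝ} (hab : a ≤ b)
    (hf : IntervalIntegrable f volume a b) (hf_nonneg : ∀ x ∈ Ioc a b, 0 ≤ f x) :
    ∫⁻ x in Ioc a b, ENNReal.ofReal (f x) = ENNReal.ofReal (∫ x in a..b, f x) := by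
  rw [intervalIntegral.integral_of_le hab, ofReal_integral_eq_lintegral_ofReal hf.1
    (ae_restrict_of_forall_mem measurableSet_Ioc hf_nonneg)]

section

variable {r : ℝ} (hr : 0 < r) {a b : ℝ}
include hr

lemma intervalIntegrable_mul_rpow_sub_one (c : ℝ) :
    IntervalIntegrable (fun v : ℝ => r * v ^ (r - 1)) volume 0 c :=
  (intervalIntegral.intervalIntegrable_rpow' (by linarith)).const_mul r

lemma setLIntegral_Ioc_mul_rpow_sub_left (hab : a ≤ b) :
    ∫⁻ u in Ioc a b, ENNReal.ofReal (r * (u - a) ^ (r - 1)) = ENNReal.ofReal ((b - a) ^ r) := by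
  have h := (intervalIntegrable_mul_rpow_sub_one hr (b - a)).comp_sub_right a
  rw [zero_add, sub_add_cancel] at h
  rw [setLIntegral_Ioc_ofReal hab h fun u hu => by
      have := Real.rpow_nonneg (sub_nonneg.2 hu.1.le) (r - 1); positivity,
    intervalIntegral.integral_comp_sub_right (fun v => r * v ^ (r - 1)), sub_self,
    integral_mul_rpow_sub_one hr]

lemma setLIntegral_Icc_mul_rpow_sub_right (hab : a ≤ b) :
    ∫⁻ s in Icc a b, ENNReal.ofReal (r * (b - s) ^ (r - 1)) = ENNReal.ofReal ((b - a) ^ r) := by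
  have h := ((intervalIntegrable_mul_rpow_sub_one hr (b - a)).comp_sub_left b).symm
  rw [sub_zero, sub_sub_cancel] at h
  rw [← Measure.restrict_congr_set Ioc_ae_eq_Icc, setLIntegral_Ioc_ofReal hab h fun s hs => by
      have := Real.rpow_nonneg (sub_nonneg.2 hs.2) (r - 1); positivity,
    intervalIntegral.integral_comp_sub_left (fun v => r * v ^ (r - 1)), sub_self,
    integral_mul_rpow_sub_one hr]

end

noncomputable def quantile (μ : Measure ℝ) (t : ℝ) : ℝ :=
  sInf {y : ℝ | ENNReal.ofReal t ≤ μ (Iic y)}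

section Quantile

variable (μ : Measure ℝ) [IsProbabilityMeasure μ]

lemma quantile_le_iff {t : ℝ} (ht : t ∈ Ioo 0 1) (x : ℝ) :
    quantile μ t ≤ x ↔ t ≤ cdf μ x := by
  have hS : {y : ℝ | ENNReal.ofReal t ≤ μ (Iic y)} = {y | t ≤ cdf μ y} := by
    ext y
    show ENNReal.ofReal t ≤ μ (Iic y) ↔ t ≤ cdf μ y
    rw [← ofReal_cdf, ENNReal.ofReal_le_ofReal_iff (cdf_nonneg μ y)]
  have hbdd : BddBelow {y | t ≤ cdf μ y} := by
    obtain ⟨b, hb⟩ := ((tendsto_cdf_atBot μ).eventually (gt_mem_nhds ht.1)).exists_forall_of_atBot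
    exact ⟨b, fun y hy => not_lt.1 fun hyb => (hb y hyb.le).not_ge hy⟩
  have hne : {y | t ≤ cdf μ y}.Nonempty :=
    ((tendsto_cdf_atTop μ).eventually (lt_mem_nhds ht.2)).exists.imp fun _ => le_of_lt
  rw [quantile, hS]
  refine ⟨fun hx => ?_, fun hx => csInf_le hbdd hx⟩
  have hright : ∀ᶠ y in 𝓝[>] x, t ≤ cdf μ y := by
    filter_upwards [self_mem_nhdsWithin] with y hy
    obtain ⟨w, hw, hwy⟩ := (csInf_lt_iff hbdd hne).1 (hx.trans_lt hy)
    exact hw.trans (monotone_cdf μ hwy.le)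
  exact ge_of_tendsto (((cdf μ).right_continuous x).mono Ioi_subset_Ici_self) hright

lemma monotoneOn_quantile : MonotoneOn (quantile μ) (Ioo 0 1) := fun _ ha _ hb hab =>
  (quantile_le_iff μ ha _).2 (hab.trans ((quantile_le_iff μ hb _).1 le_rfl))

lemma aemeasurable_quantile : AEMeasurable (quantile μ) (volume.restrict (Ioo 0 1)) :=
  aemeasurable_restrict_of_monotoneOn measurableSet_Ioo (monotoneOn_quantile μ)

lemma map_quantile : (volume.restrict (Ioo (0 : ℝ) 1)).map (quantile μ) = μ := by
  have hq := aemeasurable_quantile μ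
  refine Measure.ext_of_Iic _ _ fun x => ?_
  have hpre : quantile μ ⁻¹' Iic x ∩ Ioo 0 1 = Ioo 0 1 ∩ Iic (cdf μ x) := by
    ext t
    simp only [mem_inter_iff, mem_preimage, mem_Iic]
    exact ⟨fun h => ⟨h.2, (quantile_le_iff μ h.2 x).1 h.1⟩,
      fun h => ⟨(quantile_le_iff μ h.1 x).2 h.2, h.1⟩⟩
  rw [Measure.map_apply_of_aemeasurable hq measurableSet_Iic,
    Measure.restrict_apply' measurableSet_Ioo, hpre, ← ofReal_cdf,
    measure_congr (Ioo_ae_eq_Ioc.inter (EventuallyEq.refl _ (Iic (cdf μ x)))), Ioc_inter_Iic,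
    min_eq_right (cdf_le_one μ x), Real.volume_Ioc, sub_zero]

lemma volume_inter_preimage_quantile {J : Set ℝ} (hJ : MeasurableSet J) :
    volume (Ioo 0 1 ∩ quantile μ ⁻¹' J) = μ J := by
  conv_rhs => rw [← map_quantile μ]
  rw [Measure.map_apply_of_aemeasurable (aemeasurable_quantile μ) hJ,
    Measure.restrict_apply' measurableSet_Ioo, inter_comm]

end Quantile

noncomputable def quantileCoupling (μ ν : Measure ℝ) : Measure (ℝ × ℝ) :=
  (volume.restrict (Ioo 0 1)).map fun t => (quantile μ t, quantile ν t)

section QuantileCoupling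

variable (μ ν : Measure ℝ) [IsProbabilityMeasure μ] [IsProbabilityMeasure ν]

lemma aemeasurable_quantile_prod :
    AEMeasurable (fun t => (quantile μ t, quantile ν t)) (volume.restrict (Ioo 0 1)) :=
  (aemeasurable_quantile μ).prodMk (aemeasurable_quantile ν)

lemma quantileCoupling_fst : (quantileCoupling μ ν).fst = μ := by
  rw [Measure.fst, quantileCoupling, AEMeasurable.map_map_of_aemeasurable
    measurable_fst.aemeasurable (aemeasurable_quantile_prod μ ν)]
  exact map_quantile μ

lemma quantileCoupling_snd : (quantileCoupling μ ν).snd = ν := by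
  rw [Measure.snd, quantileCoupling, AEMeasurable.map_map_of_aemeasurable
    measurable_snd.aemeasurable (aemeasurable_quantile_prod μ ν)]
  exact map_quantile ν

instance : IsProbabilityMeasure (quantileCoupling μ ν) :=
  isProbabilityMeasure_of_fst_eq (quantileCoupling_fst μ ν)

lemma quantileCoupling_map_swap : (quantileCoupling μ ν).map Prod.swap = quantileCoupling ν μ :=
  AEMeasurable.map_map_of_aemeasurable measurable_swap.aemeasurable
    (aemeasurable_quantile_prod μ ν)

lemma quantileCoupling_Ici_prod_Iic (s u : ℝ) :
    quantileCoupling μ ν (Ici u ×ˢ Iic s) = ν (Iic s) - μ (Iio u) := by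
  have hμ := volume_inter_preimage_quantile μ (measurableSet_Iio (a := u))
  have hpre : (fun t => (quantile μ t, quantile ν t)) ⁻¹' (Ici u ×ˢ Iic s) ∩ Ioo 0 1
      = (Ioo 0 1 ∩ quantile ν ⁻¹' Iic s) \ (Ioo 0 1 ∩ quantile μ ⁻¹' Iio u) := by
    ext t
    simp only [mem_inter_iff, mem_preimage, mem_prod, mem_Ici, mem_Iic, Set.mem_sdiff, mem_Iio,
      not_and, not_lt]
    tauto
  rw [quantileCoupling, Measure.map_apply_of_aemeasurable (aemeasurable_quantile_prod μ ν)
      (measurableSet_Ici.prod measurableSet_Iic), Measure.restrict_apply' measurableSet_Ioo, hpre,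
    measure_sdiff_of_subset_total
      (ordConnected_inter_preimage_of_monotoneOn ordConnected_Ioo (monotoneOn_quantile μ)
        (isLowerSet_Iio u)).measurableSet
      (hμ.trans_ne (measure_ne_top μ _))
      (inter_preimage_subset_total_of_monotoneOn (monotoneOn_quantile ν) (monotoneOn_quantile μ)
        (isLowerSet_Iic s) (isLowerSet_Iio u)),
    volume_inter_preimage_quantile ν measurableSet_Iic, hμ]

end QuantileCoupling

-- `p (p - 1) (u - s) ^ (p - 2)` is the second derivative of `r ↦ r ^ p` at `u - s`; the exponent
-- is written `p - 1 - 1` so that `setLIntegral_Ioc_mul_rpow_sub_left` applies with `r = p - 1`.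
noncomputable def costDensity (p : ℝ) (su : ℝ × ℝ) : ℝ≥0∞ :=
  if su.1 < su.2 then ENNReal.ofReal (p * ((p - 1) * (su.2 - su.1) ^ (p - 1 - 1))) else 0

noncomputable def costMeasure (p : ℝ) : Measure (ℝ × ℝ) :=
  volume.withDensity (costDensity p)

instance (p : ℝ) : SFinite (costMeasure p) := by
  unfold costMeasure; infer_instance

lemma measurable_costDensity (p : ℝ) : Measurable (costDensity p) :=
  Measurable.ite (measurableSet_lt measurable_fst measurable_snd) (by fun_prop) measurable_const

lemma costMeasure_Ici_prod_Iic_of_le (p : ℝ) {x y : ℝ} (hxy : x ≤ y) :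
    costMeasure p (Ici y ×ˢ Iic x) = 0 := by
  rw [costMeasure, withDensity_apply _ (measurableSet_Ici.prod measurableSet_Iic)]
  refine (setLIntegral_congr_fun (measurableSet_Ici.prod measurableSet_Iic)
    fun su hsu => if_neg ?_).trans lintegral_zero
  exact not_lt.2 (hsu.2.trans (hxy.trans hsu.1))

variable {p : ℝ} (hp : 1 < p)
include hp

lemma setLIntegral_Iic_costDensity (s x : ℝ) :
    ∫⁻ u in Iic x, costDensity p (s, u)
      = (Iic x).indicator (fun s => ENNReal.ofReal (p * (x - s) ^ (p - 1))) s := by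
  have hdens : (fun u => costDensity p (s, u))
      = (Ioi s).indicator fun u =>
          ENNReal.ofReal p * ENNReal.ofReal ((p - 1) * (u - s) ^ (p - 1 - 1)) := by
    ext u
    simp only [costDensity, indicator, mem_Ioi, ← ENNReal.ofReal_mul (by linarith : (0:ℝ) ≤ p)]
  rw [hdens, setLIntegral_indicator measurableSet_Ioi, Ioi_inter_Iic]
  rcases le_or_gt s x with hsx | hxs
  · rw [indicator_of_mem (mem_Iic.2 hsx), lintegral_const_mul' _ _ ENNReal.ofReal_ne_top,
      setLIntegral_Ioc_mul_rpow_sub_left (by linarith) hsx, ← ENNReal.ofReal_mul (by linarith)]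
  · rw [indicator_of_notMem (notMem_Iic.2 hxs), Ioc_eq_empty (not_lt.2 hxs.le),
      Measure.restrict_empty, lintegral_zero_measure]

lemma costMeasure_Ici_prod_Iic {x y : ℝ} (hyx : y ≤ x) :
    costMeasure p (Ici y ×ˢ Iic x) = ENNReal.ofReal ((x - y) ^ p) := by
  rw [costMeasure, withDensity_apply _ (measurableSet_Ici.prod measurableSet_Iic),
    Measure.volume_eq_prod, setLIntegral_prod _ (measurable_costDensity p).aemeasurable]
  simp_rw [setLIntegral_Iic_costDensity hp]
  rw [setLIntegral_indicator measurableSet_Iic, Iic_inter_Ici,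
    setLIntegral_Icc_mul_rpow_sub_right (by linarith) hyx]

lemma ofReal_abs_sub_rpow (x y : ℝ) :
    ENNReal.ofReal (|x - y| ^ p)
      = costMeasure p (Ici y ×ˢ Iic x) + costMeasure p (Ici x ×ˢ Iic y) := by
  rcases le_total y x with h | h
  · rw [costMeasure_Ici_prod_Iic hp h, costMeasure_Ici_prod_Iic_of_le p h, add_zero,
      abs_of_nonneg (sub_nonneg.2 h)]
  · rw [costMeasure_Ici_prod_Iic_of_le p h, costMeasure_Ici_prod_Iic hp h, zero_add, abs_sub_comm,
      abs_of_nonneg (sub_nonneg.2 h)]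

lemma lintegral_ofReal_abs_sub_rpow (η : Measure (ℝ × ℝ)) [SFinite η] :
    ∫⁻ q, ENNReal.ofReal (|q.1 - q.2| ^ p) ∂η
      = ∫⁻ su, η (Ici su.2 ×ˢ Iic su.1) ∂costMeasure p
        + ∫⁻ su, η.map Prod.swap (Ici su.2 ×ˢ Iic su.1) ∂costMeasure p := by
  simp_rw [ofReal_abs_sub_rpow hp]
  rw [lintegral_add_left (measurable_measure_Ici_prod_Iic _),
    lintegral_measure_Ici_prod_Iic_comm η,
    ← lintegral_measure_Ici_prod_Iic_comm (η.map Prod.swap),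
    lintegral_map (measurable_measure_Ici_prod_Iic _) measurable_swap]
  rfl

end OneDimensionalTransport

open OneDimensionalTransport in
theorem one_dimensional_wasserstein_eq_quantile_integral_general
    (p : ℝ) (hp : 1 < p)
    (μ ν : Measure ℝ)
    (hμ : IsProbabilityMeasure μ) (hν : IsProbabilityMeasure ν) :
    (⨅ η : {η : Measure (ℝ × ℝ) //
        η.map Prod.fst = μ ∧ η.map Prod.snd = ν},
      ∫⁻ q, ENNReal.ofReal (|q.1 - q.2| ^ p) ∂(η.1))
    = ∫⁻ t in Set.Ioo (0:ℝ) 1,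
        ENNReal.ofReal
          (|sInf {y : ℝ | ENNReal.ofReal t ≤ μ (Set.Iic y)}
            - sInf {y : ℝ | ENNReal.ofReal t ≤ ν (Set.Iic y)}| ^ p) := by
  have hcost : Measurable fun q : ℝ × ℝ => ENNReal.ofReal (|q.1 - q.2| ^ p) := by fun_prop
  have hquantile : ∫⁻ t in Ioo (0 : ℝ) 1, ENNReal.ofReal (|quantile μ t - quantile ν t| ^ p)
      = ∫⁻ q, ENNReal.ofReal (|q.1 - q.2| ^ p) ∂quantileCoupling μ ν :=
    (lintegral_map' hcost.aemeasurable (aemeasurable_quantile_prod μ ν)).symm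
  change _ = ∫⁻ t in Ioo (0 : ℝ) 1, ENNReal.ofReal (|quantile μ t - quantile ν t| ^ p)
  rw [hquantile]
  refine le_antisymm (iInf_le_of_le ⟨_, quantileCoupling_fst μ ν, quantileCoupling_snd μ ν⟩ le_rfl)
    (le_iInf fun ⟨η, hη⟩ => ?_)
  have hη₁ : η.fst = μ := hη.1
  have hη₂ : η.snd = ν := hη.2
  have : IsProbabilityMeasure η := isProbabilityMeasure_of_fst_eq hη₁
  rw [lintegral_ofReal_abs_sub_rpow hp, lintegral_ofReal_abs_sub_rpow hp,
    quantileCoupling_map_swap]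
  refine add_le_add (lintegral_mono fun su => ?_) (lintegral_mono fun su => ?_)
  · rw [quantileCoupling_Ici_prod_Iic]
    exact sub_le_measure_Ici_prod_Iic hη₁ hη₂ _ _
  · rw [quantileCoupling_Ici_prod_Iic]
    exact sub_le_measure_Ici_prod_Iic (by rwa [Measure.fst_map_swap])
      (by rwa [Measure.snd_map_swap]) _ _

/-- for probability measures `μ, ν` on `ℝ` with finite `p`-th
moments, the `p`-th power Wasserstein distance (infimum of the transport cost
over couplings) equals `∫₀¹ |F⁻¹(y) − G⁻¹(y)|^p dy`, where `F⁻¹` and `G⁻¹` are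
the generalized inverse distribution functions of `μ` and `ν`. -/
theorem one_dimensional_wasserstein_eq_quantile_integral
    (p : ℝ) (hp : 1 < p)
    (μ ν : Measure ℝ)
    (hμ : IsProbabilityMeasure μ) (hν : IsProbabilityMeasure ν)
    (hμmom : ∫⁻ y, ENNReal.ofReal (|y| ^ p) ∂μ < ⊤)
    (hνmom : ∫⁻ y, ENNReal.ofReal (|y| ^ p) ∂ν < ⊤) :
    (⨅ η : {η : Measure (ℝ × ℝ) //
        η.map Prod.fst = μ ∧ η.map Prod.snd = ν},
      ∫⁻ q, ENNReal.ofReal (|q.1 - q.2| ^ p) ∂(η.1))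
    = ∫⁻ t in Set.Ioo (0:ℝ) 1,
        ENNReal.ofReal
          (|sInf {y : ℝ | ENNReal.ofReal t ≤ μ (Set.Iic y)}
            - sInf {y : ℝ | ENNReal.ofReal t ≤ ν (Set.Iic y)}| ^ p) :=
  one_dimensional_wasserstein_eq_quantile_integral_general p hp μ ν hμ hν
end
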